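/- Let G be an ultragraph and π : C*(G) → B(H) a permutative representation. Then π is unitarily equivalent to a representation of C*(G) on ℓ²(ℕ) induced from a G-branching system on ℕ with counting measure: setting R_e = {n : h_n ∈ B_e}, D_A = {n : h_n ∈ B_A} and defining bijections f_e : D_{r(e)} → R_e by h_{f_e(n)} = π(s_e)(h_n), where B = {h_n}_{n∈ℕ} is the distinguished basis, one obtains a G-branching system whose induced representation is unitarily equivalent to π via the unitary h_n ↦ δ_n. -/

import Mathlib

open MeasureTheory Filter Set
open scoped ENNReal

universe u v w

structure Ultragraph (V : Type u) (E : Type v) where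
  s : E → V
  r : E → Set V
  r_nonempty : ∀ e, (r e).Nonempty

namespace Ultragraph

variable {V : Type u} {E : Type v}

/-- The lattice `𝒢⁰` of Tomforde (with `∅` included, so that `p_∅ = 0` makes sense). -/
inductive InG0 (G : Ultragraph V E) : Set V → Prop
  | empty : InG0 G ∅
  | singleton (v : V) : InG0 G {v}
  | range (e : E) : InG0 G (G.r e)
  | union {A B : Set V} : InG0 G A → InG0 G B → InG0 G (A ∪ B)
  | inter {A B : Set V} : InG0 G A → InG0 G B → InG0 G (A ∩ B)

/-- A `G`-branching system on a measure space `(X, μ)`. -/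
structure BranchingSystem (G : Ultragraph V E) (X : Type w) [MeasurableSpace X]
    (μ : Measure X) where
  R : E → Set X
  D : Set V → Set X
  f : E → X → X
  finv : E → X → X
  measurableSet_R : ∀ e, MeasurableSet (R e)
  measurableSet_D : ∀ A, G.InG0 A → MeasurableSet (D A)
  ae_disjoint : ∀ e e', e ≠ e' → μ (R e ∩ R e') = 0
  D_empty : D ∅ = ∅
  D_inter : ∀ A B, G.InG0 A → G.InG0 B → (D A ∩ D B : Set X) =ᵐ[μ] (D (A ∩ B) : Set X)
  D_union : ∀ A B, G.InG0 A → G.InG0 B → (D A ∪ D B : Set X) =ᵐ[μ] (D (A ∪ B) : Set X)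
  R_subset_D : ∀ e, μ (R e \ D {G.s e}) = 0
  D_eq_iUnion : ∀ v, {e | G.s e = v}.Finite → {e | G.s e = v}.Nonempty →
    (D {v} : Set X) =ᵐ[μ] (⋃ e ∈ {e | G.s e = v}, R e : Set X)
  measurable_f : ∀ e, Measurable (f e)
  measurable_finv : ∀ e, Measurable (finv e)
  mapsTo_f : ∀ e, Set.MapsTo (f e) (D (G.r e)) (R e)
  mapsTo_finv : ∀ e, Set.MapsTo (finv e) (R e) (D (G.r e))
  f_finv : ∀ e, ∀ᵐ x ∂(μ.restrict (R e)), f e (finv e x) = x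
  finv_f : ∀ e, ∀ᵐ x ∂(μ.restrict (D (G.r e))), finv e (f e x) = x
  pushforward_f_ac : ∀ e, (μ.restrict (R e)).map (finv e) ≪ μ.restrict (D (G.r e))
  pushforward_finv_ac : ∀ e, (μ.restrict (D (G.r e))).map (f e) ≪ μ.restrict (R e)

variable {G : Ultragraph V E} {X : Type w} [MeasurableSpace X] {μ : Measure X}

/-- `Φ_{f_e} = d(μ ∘ f_e)/dμ` (where `μ ∘ f_e` is the pushforward of `μ|_{R_e}` by `f_e⁻¹`). -/
noncomputable def BranchingSystem.PhiF (B : BranchingSystem G X μ) (e : E) : X → ℝ≥0∞ :=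
  ((μ.restrict (B.R e)).map (B.finv e)).rnDeriv μ

/-- `Φ_{f_e⁻¹} = d(μ ∘ f_e⁻¹)/dμ`. -/
noncomputable def BranchingSystem.PhiFinv (B : BranchingSystem G X μ) (e : E) : X → ℝ≥0∞ :=
  ((μ.restrict (B.D (G.r e))).map (B.f e)).rnDeriv μ

/-- `S_e φ = Φ_{f_e⁻¹}^{1/2} ⬝ (φ ∘ f_e⁻¹)`, extended by zero off `R_e`. -/
noncomputable def BranchingSystem.SFun (B : BranchingSystem G X μ) (e : E) (φ : X → ℂ) :
    X → ℂ :=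
  (B.R e).indicator fun x => (Real.sqrt ((B.PhiFinv e x).toReal) : ℂ) * φ (B.finv e x)

/-- `S_e^* φ = Φ_{f_e}^{1/2} ⬝ (φ ∘ f_e)`, extended by zero off `D_{r(e)}`. -/
noncomputable def BranchingSystem.SStarFun (B : BranchingSystem G X μ) (e : E) (φ : X → ℂ) :
    X → ℂ :=
  (B.D (G.r e)).indicator fun x => (Real.sqrt ((B.PhiF e x).toReal) : ℂ) * φ (B.f e x)

/-- `f_α = f_{α₁} ∘ ⋯ ∘ f_{αₙ}` for a path `α`. -/
def BranchingSystem.fPath (B : BranchingSystem G X μ) :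
    ∀ k : ℕ, (Fin (k + 1) → E) → X → X
  | 0, α => B.f (α 0)
  | k + 1, α => B.f (α 0) ∘ BranchingSystem.fPath B k fun i => α i.succ

/-- A Cuntz–Krieger `G`-family in a star ring. -/
structure CKFamily (G : Ultragraph V E) (A : Type w) [NonUnitalRing A] [StarRing A] where
  P : Set V → A
  S : E → A
  P_empty : P ∅ = 0
  P_star : ∀ B, G.InG0 B → star (P B) = P B
  P_mul : ∀ B C, G.InG0 B → G.InG0 C → P B * P C = P (B ∩ C)
  P_union : ∀ B C, G.InG0 B → G.InG0 C → P (B ∪ C) = P B + P C - P (B ∩ C)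
  S_orth : ∀ e e', e ≠ e' → star (S e) * S e' = 0
  S_star_mul : ∀ e, star (S e) * S e = P (G.r e)
  S_le : ∀ e, P {G.s e} * (S e * star (S e)) = S e * star (S e)
  CK : ∀ v, (h : {e | G.s e = v}.Finite) → {e | G.s e = v}.Nonempty →
    P {v} = ∑ e ∈ h.toFinset, S e * star (S e)

/-- `s_α = s_{α₁} ⋯ s_{αₙ}` for a path `α`. -/
def CKFamily.sPath {A : Type w} [NonUnitalRing A] [StarRing A] (F : CKFamily G A) :
    ∀ k : ℕ, (Fin (k + 1) → E) → A
  | 0, α => F.S (α 0)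
  | k + 1, α => F.S (α 0) * CKFamily.sPath F k fun i => α i.succ

def IsPath (G : Ultragraph V E) {k : ℕ} (α : Fin (k + 1) → E) : Prop :=
  ∀ i : Fin k, G.s (α i.succ) ∈ G.r (α i.castSucc)

def IsCycle (G : Ultragraph V E) {k : ℕ} (α : Fin (k + 1) → E) : Prop :=
  IsPath G α ∧ G.s (α 0) ∈ G.r (α (Fin.last k))

/-- A simple cycle without exits: a cycle with pairwise distinct edges such that each
`r(αᵢ)` is a singleton and `s⁻¹(s(αᵢ)) = {αᵢ}`. -/
def IsSimpleCycleNoExits (G : Ultragraph V E) {k : ℕ} (α : Fin (k + 1) → E) : Prop :=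
  IsCycle G α ∧ Function.Injective α ∧
    ∀ i, (∃ w, G.r (α i) = {w}) ∧ ∀ e, G.s e = G.s (α i) → e = α i

def HasExit (G : Ultragraph V E) {k : ℕ} (α : Fin (k + 1) → E) : Prop :=
  (∃ i : Fin k, {e | G.s e ∈ G.r (α i.castSucc)} ≠ {α i.succ}) ∨
  {e | G.s e ∈ G.r (α (Fin.last k))} ≠ {α 0} ∨
  ∃ i, ∃ v ∈ G.r (α i), ∀ e, G.s e ≠ v

def ConditionL (G : Ultragraph V E) : Prop :=
  ∀ (k : ℕ) (α : Fin (k + 1) → E), IsCycle G α → HasExit G α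

def Hereditary (G : Ultragraph V E) (H : Set (Set V)) : Prop :=
  (∀ A ∈ H, G.InG0 A) ∧ (∀ A ∈ H, ∀ B ∈ H, A ∪ B ∈ H) ∧
  (∀ A ∈ H, ∀ B, G.InG0 B → B ⊆ A → B ∈ H) ∧
  ∀ e, {G.s e} ∈ H → G.r e ∈ H

def Saturated (G : Ultragraph V E) (T : Set (Set V)) : Prop :=
  ∀ v, {e | G.s e = v}.Finite → {e | G.s e = v}.Nonempty →
    (∀ e, G.s e = v → G.r e ∈ T) → {v} ∈ T

end Ultragraph

/-- A closed two-sided (complex) ideal, as a subset. -/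
def IsClosedTwoSidedIdealIn (A : Type w) [NonUnitalNormedRing A] [Module ℂ A]
    (J : Set A) : Prop :=
  IsClosed J ∧ (0 : A) ∈ J ∧ (∀ x ∈ J, ∀ y ∈ J, x + y ∈ J) ∧
    (∀ (c : ℂ), ∀ x ∈ J, c • x ∈ J) ∧ ∀ x ∈ J, ∀ a, a * x ∈ J ∧ x * a ∈ J

/-- The smallest closed two-sided ideal containing `s`. -/
def idealGeneratedBy {A : Type w} [NonUnitalNormedRing A] [Module ℂ A] (s : Set A) : Set A :=
  ⋂₀ {J | IsClosedTwoSidedIdealIn A J ∧ s ⊆ J}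

namespace Ultragraph

/-- A model of the ultragraph C*-algebra `C*(G)`: a C*-algebra generated by a universal
Cuntz–Krieger `G`-family, together with its gauge action. -/
structure UltragraphCStarAlgebra (G : Ultragraph V E) (A : Type w)
    [NonUnitalNormedRing A] [StarRing A] [CStarRing A] [NormedSpace ℂ A]
    [IsScalarTower ℂ A A] [SMulCommClass ℂ A A] [StarModule ℂ A] [CompleteSpace A] where
  fam : CKFamily G A
  P_ne_zero : ∀ B, G.InG0 B → B.Nonempty → fam.P B ≠ 0
  generates : ∀ C : Set A, IsClosed C →
    (∀ x ∈ C, ∀ y ∈ C, x + y ∈ C) → (∀ x ∈ C, ∀ y ∈ C, x * y ∈ C) →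
    (∀ (c : ℂ), ∀ x ∈ C, c • x ∈ C) → (∀ x ∈ C, star x ∈ C) →
    (∀ B, G.InG0 B → fam.P B ∈ C) → (∀ e, fam.S e ∈ C) → ∀ x, x ∈ C
  gauge : ∀ z : ℂ, ‖z‖ = 1 → A ≃⋆ₐ[ℂ] A
  gauge_P : ∀ z hz B, G.InG0 B → gauge z hz (fam.P B) = fam.P B
  gauge_S : ∀ z hz e, gauge z hz (fam.S e) = z • fam.S e
  universal : ∀ (B : Type w) [NonUnitalNormedRing B] [StarRing B] [CStarRing B]
    [NormedSpace ℂ B] [IsScalarTower ℂ B B] [SMulCommClass ℂ B B] [StarModule ℂ B]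
    [CompleteSpace B], ∀ F : CKFamily G B,
    ∃ φ : A →⋆ₙₐ[ℂ] B, Continuous φ ∧
      (∀ C, G.InG0 C → φ (fam.P C) = F.P C) ∧ ∀ e, φ (fam.S e) = F.S e

end Ultragraph

/-- `T` is an orthonormal basis of (the closed subspace generated by) `K`. -/
def IsONBasisOf {H : Type*} [NormedAddCommGroup H] [InnerProductSpace ℂ H]
    (T : Set H) (K : Set H) : Prop :=
  T ⊆ K ∧ Orthonormal ℂ (Subtype.val : T → H) ∧
    closure (↑(Submodule.span ℂ T) : Set H) = closure K

/-!
Every operator of a permutative representation sends basis vectors to basis vectors or to zero: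
a projection whose range is spanned by a subset of the orthonormal basis `h` fixes the basis
vectors in that subset and kills the others, and the partial isometry `S_e` maps the basis of
`P_{r(e)} H` onto the basis of `S_e S_e^* H`. So the indices fixed by `P_A` and by `S_e S_e^*`,
together with the index maps induced by `S_e` and `S_e^*`, form a branching system on `ℕ` for
the counting measure, the Cuntz–Krieger relations turning into its set-theoretic axioms. The
intertwining relations follow from `⟪h n, T x⟫ = ⟪T^* h n, x⟫`, as `T^* h n` is again a basis
vector or zero.
-/

open Function
open scoped InnerProductSpace

section OrthonormalBasis

variable {H : Type*} [NormedAddCommGroup H] [InnerProductSpace ℂ H]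

theorem IsONBasisOf.inner_eq_zero_of_forall {S K : Set H} (hS : IsONBasisOf S K) {v : H}
    (hv : ∀ w ∈ S, ⟪w, v⟫_ℂ = 0) : ∀ u ∈ K, ⟪u, v⟫_ℂ = 0 := by
  have hspan : (Submodule.span ℂ S : Set H) ⊆ (ℂ ∙ v)ᗮ :=
    Submodule.span_le.2 fun w hw => Submodule.mem_orthogonal_singleton_iff_inner_left.2 (hv w hw)
  have hK : K ⊆ (ℂ ∙ v)ᗮ :=
    calc K ⊆ closure K := subset_closure
      _ = closure (Submodule.span ℂ S : Set H) := hS.2.2.symm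
      _ ⊆ (ℂ ∙ v)ᗮ := closure_minimal hspan (Submodule.isClosed_orthogonal _)
  exact fun u hu => Submodule.mem_orthogonal_singleton_iff_inner_left.1 (hK hu)

theorem IsONBasisOf.top_le_topologicalClosure_span {S : Set H} (hS : IsONBasisOf S univ) :
    ⊤ ≤ (Submodule.span ℂ S).topologicalClosure := fun x _ => by
  rw [← SetLike.mem_coe, Submodule.topologicalClosure_coe, hS.2.2, closure_univ]
  trivial

variable [CompleteSpace H]

theorem HilbertBasis.repr_apply_eq_inner_adjoint {ι : Type*} (b : HilbertBasis ι ℂ H)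
    (T : H →L[ℂ] H) (x : H) (n : ι) : b.repr (T x) n = ⟪T.adjoint (b n), x⟫_ℂ := by
  rw [b.repr_apply_apply, ContinuousLinearMap.adjoint_inner_left]

namespace IsStarProjection

variable {p : H →L[ℂ] H} {S : Set H}

theorem apply_eq_zero_iff (hp : IsStarProjection p) {v : H} :
    p v = 0 ↔ v ∈ (p.range)ᗮ := by
  obtain ⟨_, hp_eq⟩ := isStarProjection_iff_eq_starProjection_range.mp hp
  rw [← Submodule.starProjection_apply_eq_zero_iff, ← hp_eq]

theorem apply_of_mem (hp : IsStarProjection p) (hS : IsONBasisOf S (range p)) {v : H}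
    (hv : v ∈ S) : p v = v := by
  obtain ⟨w, rfl⟩ := hS.1 hv
  exact DFunLike.congr_fun hp.isIdempotentElem.eq w

variable {ι : Type*} {h : ι → H}

theorem apply_eq_zero_of_notMem (hp : IsStarProjection p) (hon : Orthonormal ℂ h)
    (hS : IsONBasisOf S (range p)) (hSh : S ⊆ range h) {n : ι} (hn : h n ∉ S) : p (h n) = 0 := by
  refine hp.apply_eq_zero_iff.2 <| (Submodule.mem_orthogonal _ _).2 fun u hu =>
    hS.inner_eq_zero_of_forall (fun w hw => ?_) u (LinearMap.mem_range.1 hu)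
  obtain ⟨m, rfl⟩ := hSh hw
  exact hon.2 fun hmn => hn (hmn ▸ hw)

theorem apply_eq_self_iff (hp : IsStarProjection p) (hon : Orthonormal ℂ h)
    (hS : IsONBasisOf S (range p)) (hSh : S ⊆ range h) {n : ι} : p (h n) = h n ↔ h n ∈ S := by
  refine ⟨fun hfix => by_contra fun hn => hon.ne_zero n ?_, hp.apply_of_mem hS⟩
  rw [← hfix, hp.apply_eq_zero_of_notMem hon hS hSh hn]

theorem apply_eq_self_or_eq_zero (hp : IsStarProjection p) (hon : Orthonormal ℂ h)
    (hS : IsONBasisOf S (range p)) (hSh : S ⊆ range h) (n : ι) :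
    p (h n) = h n ∨ p (h n) = 0 := by
  by_cases hn : h n ∈ S
  · exact Or.inl (hp.apply_of_mem hS hn)
  · exact Or.inr (hp.apply_eq_zero_of_notMem hon hS hSh hn)

end IsStarProjection

end OrthonormalBasis

section IndexMap

variable {H : Type*} [NormedAddCommGroup H] [NormedSpace ℂ H] {ι : Type*} {h : ι → H}
  {s t p q : H →L[ℂ] H}

theorem mapsTo_invFun_comp [Nonempty ι] (hmem : ∀ n, p (h n) = h n → s (h n) ∈ range h)
    (hqs : q * s = s) :
    MapsTo (invFun h ∘ s ∘ h) {n | p (h n) = h n} {n | q (h n) = h n} := fun n hn => by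
  simp only [mem_ofPred_eq, comp_apply, invFun_eq (hmem n hn)]
  rw [← mul_apply_eq_comp, hqs]

theorem leftInvOn_invFun_comp [Nonempty ι] (hinj : Injective h)
    (hmem : ∀ n, p (h n) = h n → s (h n) ∈ range h) (hts : t * s = p) :
    LeftInvOn (invFun h ∘ t ∘ h) (invFun h ∘ s ∘ h) {n | p (h n) = h n} :=
  fun n hn => by
    have hback : t (s (h n)) = h n := by rw [← mul_apply_eq_comp, hts, hn]
    simp only [comp_apply, invFun_eq (hmem n hn), hback]
    exact leftInverse_invFun hinj n

theorem disjoint_setOf_apply_eq_self (hh : ∀ n, h n ≠ 0) (hpq : p * q = 0) :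
    Disjoint {n | p (h n) = h n} {n | q (h n) = h n} :=
  disjoint_left.2 fun n hp hq => hh n <|
    calc h n = (p * q) (h n) := by rw [mul_apply_eq_comp, hq, hp]
      _ = 0 := by rw [hpq]; rfl

end IndexMap

theorem mul_star_mul_self_eq_self_of_isIdempotentElem {A : Type*} [NonUnitalNormedRing A]
    [StarRing A] [CStarRing A] {s : A} (hs : IsIdempotentElem (star s * s)) :
    s * (star s * s) = s := by
  set q := star s * s with hq_def
  have hq : star q = q := by rw [hq_def, star_mul, star_star]
  have expand : star (s - s * q) * (s - s * q) = q - q * q - q * q + q * q * q := by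
    rw [star_sub, star_mul, hq, hq_def]
    noncomm_ring
  have hzero : star (s - s * q) * (s - s * q) = 0 := by
    rw [expand, hs.eq, hs.eq]
    abel
  exact (sub_eq_zero.1 ((CStarRing.star_mul_self_eq_zero_iff _).1 hzero)).symm

theorem MeasureTheory.Measure.map_count_restrict_absolutelyContinuous {X Y : Type*}
    [MeasurableSpace X] [DiscreteMeasurableSpace X] [MeasurableSpace Y] [DiscreteMeasurableSpace Y]
    {g : X → Y} {s : Set X} {t : Set Y} (hg : MapsTo g s t) :
    (count.restrict s).map g ≪ count.restrict t := fun u hu => by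
  rw [restrict_apply .of_discrete, count_eq_zero_iff] at hu
  rw [map_apply .of_discrete .of_discrete, restrict_apply .of_discrete, count_eq_zero_iff]
  exact eq_empty_of_forall_notMem fun x hx => hu.subset ⟨hx.1, hg hx.2⟩

namespace Ultragraph.CKFamily

variable {V E : Type*} {G : Ultragraph V E}

section Algebra

variable {A : Type*} [NonUnitalRing A] [StarRing A] (F : CKFamily G A)

theorem isStarProjection_P {B : Set V} (hB : G.InG0 B) : IsStarProjection (F.P B) :=
  ⟨by rw [IsIdempotentElem, F.P_mul B B hB hB, inter_self], F.P_star B hB⟩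

theorem S_mul_star_mul_S_mul_star_of_ne {e e' : E} (hne : e ≠ e') :
    F.S e * star (F.S e) * (F.S e' * star (F.S e')) = 0 := by
  rw [mul_assoc, ← mul_assoc (star (F.S e)), F.S_orth e e' hne, zero_mul, mul_zero]

end Algebra

section CStarAlgebra

variable {A : Type*} [NonUnitalNormedRing A] [StarRing A] [CStarRing A] (F : CKFamily G A)

theorem S_mul_P_range (e : E) : F.S e * F.P (G.r e) = F.S e := by
  rw [← F.S_star_mul]
  exact mul_star_mul_self_eq_self_of_isIdempotentElem
    (F.S_star_mul e ▸ (F.isStarProjection_P (.range e)).isIdempotentElem)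

theorem P_range_mul_star_S (e : E) : F.P (G.r e) * star (F.S e) = star (F.S e) := by
  rw [← (F.isStarProjection_P (.range e)).isSelfAdjoint.star_eq, ← star_mul, S_mul_P_range]

theorem S_mul_star_mul_S (e : E) : F.S e * star (F.S e) * F.S e = F.S e := by
  rw [mul_assoc, F.S_star_mul, S_mul_P_range]

theorem star_S_mul_S_mul_star (e : E) :
    star (F.S e) * (F.S e * star (F.S e)) = star (F.S e) := by
  rw [← mul_assoc, F.S_star_mul, P_range_mul_star_S]

theorem isStarProjection_S_mul_star (e : E) : IsStarProjection (F.S e * star (F.S e)) :=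
  ⟨by rw [IsIdempotentElem, ← mul_assoc, S_mul_star_mul_S],
    by rw [IsSelfAdjoint, star_mul, star_star]⟩

end CStarAlgebra

section Operators

variable {H : Type*} [NormedAddCommGroup H] [InnerProductSpace ℂ H] [CompleteSpace H]
  (F : CKFamily G (H →L[ℂ] H)) {A B : Set V} {x : H}

theorem P_inter_apply (hA : G.InG0 A) (hB : G.InG0 B) (x : H) :
    F.P (A ∩ B) x = F.P A (F.P B x) := by
  rw [← F.P_mul A B hA hB, mul_apply_eq_comp]

theorem P_union_apply (hA : G.InG0 A) (hB : G.InG0 B) (x : H) :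
    F.P (A ∪ B) x = F.P A x + F.P B x - F.P A (F.P B x) := by
  rw [F.P_union A B hA hB, ← P_inter_apply F hA hB]
  rfl

theorem P_apply_eq_self_or_eq_zero (hsingleton : ∀ v, F.P {v} x = x ∨ F.P {v} x = 0)
    (hrange : ∀ e, F.P (G.r e) x = x ∨ F.P (G.r e) x = 0) (hA : G.InG0 A) :
    F.P A x = x ∨ F.P A x = 0 := by
  induction hA with
  | empty => exact Or.inr (by rw [F.P_empty]; rfl)
  | singleton v => exact hsingleton v
  | range e => exact hrange e
  | union hA hB ihA ihB =>
    rw [F.P_union_apply hA hB]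
    rcases ihA with hAx | hAx <;> rcases ihB with hBx | hBx <;> simp [hAx, hBx]
  | inter hA hB ihA ihB =>
    rw [F.P_inter_apply hA hB]
    rcases ihB with hBx | hBx <;> simp [hBx, ihA]

theorem P_inter_apply_eq_self_iff (hx : x ≠ 0) (hBx : F.P B x = x ∨ F.P B x = 0)
    (hA : G.InG0 A) (hB : G.InG0 B) : F.P (A ∩ B) x = x ↔ F.P A x = x ∧ F.P B x = x := by
  rw [F.P_inter_apply hA hB]
  rcases hBx with hBx | hBx <;> simp [hBx, hx.symm]

theorem P_union_apply_eq_self_iff (hx : x ≠ 0) (hAx : F.P A x = x ∨ F.P A x = 0)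
    (hBx : F.P B x = x ∨ F.P B x = 0) (hA : G.InG0 A) (hB : G.InG0 B) :
    F.P (A ∪ B) x = x ↔ F.P A x = x ∨ F.P B x = x := by
  rw [F.P_union_apply hA hB]
  rcases hAx with hAx | hAx <;> rcases hBx with hBx | hBx <;> simp [hAx, hBx, hx.symm]

theorem P_source_apply_eq_self {e : E} (hx : (F.S e * star (F.S e)) x = x) :
    F.P {G.s e} x = x := by
  rw [← hx, ← mul_apply_eq_comp, F.S_le]

theorem P_singleton_apply_eq_self_iff (hx : x ≠ 0)
    (hQx : ∀ e, (F.S e * star (F.S e)) x = x ∨ (F.S e * star (F.S e)) x = 0) {v : V}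
    (hfin : {e | G.s e = v}.Finite) (hne : {e | G.s e = v}.Nonempty) :
    F.P {v} x = x ↔ ∃ e, G.s e = v ∧ (F.S e * star (F.S e)) x = x := by
  refine ⟨fun hPx => ?_, fun ⟨e, hev, hQ⟩ => hev ▸ F.P_source_apply_eq_self hQ⟩
  by_contra! hQ
  have hPx0 : F.P {v} x = 0 := by
    rw [F.CK v hfin hne, sum_apply]
    exact Finset.sum_eq_zero fun e he => (hQx e).resolve_left (hQ e (hfin.mem_toFinset.1 he))
  exact hx (hPx.symm.trans hPx0)

end Operators

end Ultragraph.CKFamily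

namespace Ultragraph.BranchingSystem

variable {V E : Type*} {G : Ultragraph V E} {X : Type*} [MeasurableSpace X]
  [DiscreteMeasurableSpace X]

def ofCount (R : E → Set X) (D : Set V → Set X) (f finv : E → X → X)
    (disjoint_R : Pairwise fun e e' => Disjoint (R e) (R e'))
    (D_empty : D ∅ = ∅)
    (D_inter : ∀ A B, G.InG0 A → G.InG0 B → D (A ∩ B) = D A ∩ D B)
    (D_union : ∀ A B, G.InG0 A → G.InG0 B → D (A ∪ B) = D A ∪ D B)
    (R_subset_D : ∀ e, R e ⊆ D {G.s e})
    (D_eq_iUnion : ∀ v, {e | G.s e = v}.Finite → {e | G.s e = v}.Nonempty →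
      D {v} = ⋃ e ∈ {e | G.s e = v}, R e)
    (mapsTo_f : ∀ e, MapsTo (f e) (D (G.r e)) (R e))
    (mapsTo_finv : ∀ e, MapsTo (finv e) (R e) (D (G.r e)))
    (invOn : ∀ e, InvOn (finv e) (f e) (D (G.r e)) (R e)) :
    BranchingSystem G X Measure.count where
  R := R
  D := D
  f := f
  finv := finv
  measurableSet_R _ := .of_discrete
  measurableSet_D _ _ := .of_discrete
  ae_disjoint e e' hne := by rw [(disjoint_R hne).inter_eq, measure_empty]
  D_empty := D_empty
  D_inter A B hA hB := .of_eq (D_inter A B hA hB).symm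
  D_union A B hA hB := .of_eq (D_union A B hA hB).symm
  R_subset_D e := by rw [sdiff_eq_empty.2 (R_subset_D e), measure_empty]
  D_eq_iUnion v hfin hne := .of_eq (D_eq_iUnion v hfin hne)
  measurable_f _ := .of_discrete
  measurable_finv _ := .of_discrete
  mapsTo_f := mapsTo_f
  mapsTo_finv := mapsTo_finv
  f_finv e := (ae_restrict_iff' .of_discrete).2 (ae_of_all _ (invOn e).2)
  finv_f e := (ae_restrict_iff' .of_discrete).2 (ae_of_all _ (invOn e).1)
  pushforward_f_ac e := Measure.map_count_restrict_absolutelyContinuous (mapsTo_finv e)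
  pushforward_finv_ac e := Measure.map_count_restrict_absolutelyContinuous (mapsTo_f e)

end Ultragraph.BranchingSystem

namespace Ultragraph.CKFamily

variable {V E : Type*} {G : Ultragraph V E} {H : Type*} [NormedAddCommGroup H]
  [InnerProductSpace ℂ H] [CompleteSpace H] {ι : Type*}

structure IsPermutativeBasis (F : CKFamily G (H →L[ℂ] H)) (h : ι → H) : Prop where
  orthonormal : Orthonormal ℂ h
  P_apply : ∀ A, G.InG0 A → ∀ n, F.P A (h n) = h n ∨ F.P A (h n) = 0
  S_mul_star_apply : ∀ e n,
    (F.S e * star (F.S e)) (h n) = h n ∨ (F.S e * star (F.S e)) (h n) = 0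
  S_apply_mem_range : ∀ e n, F.P (G.r e) (h n) = h n → F.S e (h n) ∈ range h
  star_S_apply_mem_range : ∀ e n,
    (F.S e * star (F.S e)) (h n) = h n → star (F.S e) (h n) ∈ range h

variable {F : CKFamily G (H →L[ℂ] H)} {h : ι → H}

theorem isPermutativeBasis_of_isONBasisOf (hon : Orthonormal ℂ h) {Bv : V → Set H}
    {Bre Be : E → Set H} (hBv : ∀ v, IsONBasisOf (Bv v) (range ⇑(F.P {v})))
    (hBre : ∀ e, IsONBasisOf (Bre e) (range ⇑(F.P (G.r e))))
    (hBe : ∀ e, IsONBasisOf (Be e) (range ⇑(F.S e * star (F.S e))))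
    (hBvB : ∀ v, Bv v ⊆ range h) (hBreB : ∀ e, Bre e ⊆ range h) (hBeB : ∀ e, Be e ⊆ range h)
    (hB2B : ∀ e, ⇑(F.S e) '' Bre e = Be e) : F.IsPermutativeBasis h where
  orthonormal := hon
  P_apply _ hA n := F.P_apply_eq_self_or_eq_zero
    (fun v => (F.isStarProjection_P (.singleton v)).apply_eq_self_or_eq_zero hon (hBv v) (hBvB v) n)
    (fun e => (F.isStarProjection_P (.range e)).apply_eq_self_or_eq_zero hon (hBre e) (hBreB e) n)
    hA
  S_mul_star_apply e :=
    (F.isStarProjection_S_mul_star e).apply_eq_self_or_eq_zero hon (hBe e) (hBeB e)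
  S_apply_mem_range e n hn := by
    have hmem := ((F.isStarProjection_P (.range e)).apply_eq_self_iff hon (hBre e) (hBreB e)).1 hn
    exact hBeB e (hB2B e ▸ mem_image_of_mem _ hmem)
  star_S_apply_mem_range e n hn := by
    have hmem := ((F.isStarProjection_S_mul_star e).apply_eq_self_iff hon (hBe e) (hBeB e)).1 hn
    obtain ⟨y, hy, hyn⟩ := (hB2B e).symm ▸ hmem
    have hPy : F.P (G.r e) y = y := (F.isStarProjection_P (.range e)).apply_of_mem (hBre e) hy
    rw [← hyn, ← mul_apply_eq_comp, F.S_star_mul, hPy]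
    exact hBreB e hy

namespace IsPermutativeBasis

variable [MeasurableSpace ι] [DiscreteMeasurableSpace ι] [Nonempty ι] (hF : F.IsPermutativeBasis h)

noncomputable def branchingSystem : BranchingSystem G ι Measure.count :=
  BranchingSystem.ofCount (fun e => {n | (F.S e * star (F.S e)) (h n) = h n})
    (fun A => {n | F.P A (h n) = h n}) (fun e => invFun h ∘ F.S e ∘ h)
    (fun e => invFun h ∘ ⇑(star (F.S e)) ∘ h)
    (fun _ _ hne => disjoint_setOf_apply_eq_self hF.orthonormal.ne_zero
      (F.S_mul_star_mul_S_mul_star_of_ne hne))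
    (eq_empty_of_forall_notMem fun n hn =>
      hF.orthonormal.ne_zero n (hn.symm.trans (by rw [F.P_empty]; rfl)))
    (fun _ B hA hB => ext fun n =>
      F.P_inter_apply_eq_self_iff (hF.orthonormal.ne_zero n) (hF.P_apply B hB n) hA hB)
    (fun A B hA hB => ext fun n => F.P_union_apply_eq_self_iff (hF.orthonormal.ne_zero n)
      (hF.P_apply A hA n) (hF.P_apply B hB n) hA hB)
    (fun _ _ hn => F.P_source_apply_eq_self hn)
    (fun _ hfin hne => ext fun n => by
      simpa using F.P_singleton_apply_eq_self_iff (hF.orthonormal.ne_zero n)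
        (fun e => hF.S_mul_star_apply e n) hfin hne)
    (fun e => mapsTo_invFun_comp (hF.S_apply_mem_range e) (F.S_mul_star_mul_S e))
    (fun e => mapsTo_invFun_comp (hF.star_S_apply_mem_range e) (F.P_range_mul_star_S e))
    (fun e => ⟨leftInvOn_invFun_comp hF.orthonormal.linearIndependent.injective
        (hF.S_apply_mem_range e) (F.S_star_mul e),
      leftInvOn_invFun_comp hF.orthonormal.linearIndependent.injective
        (hF.star_S_apply_mem_range e) rfl⟩)

theorem apply_f {e : E} {n : ι} (hn : n ∈ hF.branchingSystem.D (G.r e)) :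
    h (hF.branchingSystem.f e n) = F.S e (h n) :=
  invFun_eq (hF.S_apply_mem_range e n hn)

theorem apply_finv {e : E} {n : ι} (hn : n ∈ hF.branchingSystem.R e) :
    h (hF.branchingSystem.finv e n) = star (F.S e) (h n) :=
  invFun_eq (hF.star_S_apply_mem_range e n hn)

theorem star_S_apply_eq_zero {e : E} {n : ι} (hn : n ∉ hF.branchingSystem.R e) :
    star (F.S e) (h n) = 0 := by
  rw [← F.star_S_mul_S_mul_star, mul_apply_eq_comp, (hF.S_mul_star_apply e n).resolve_left hn,
    map_zero]

theorem repr_P_apply (b : HilbertBasis ι ℂ H) (hb : ⇑b = h) {A : Set V} (hA : G.InG0 A)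
    (x : H) (n : ι) : b.repr (F.P A x) n = (hF.branchingSystem.D A).indicator (b.repr x) n := by
  subst hb
  rw [b.repr_apply_eq_inner_adjoint, ← ContinuousLinearMap.star_eq_adjoint,
    (F.isStarProjection_P hA).isSelfAdjoint.star_eq]
  by_cases hn : n ∈ hF.branchingSystem.D A
  · rw [indicator_of_mem hn, hn, b.repr_apply_apply]
  · rw [indicator_of_notMem hn, (hF.P_apply A hA n).resolve_left hn, inner_zero_left]

theorem repr_S_apply (b : HilbertBasis ι ℂ H) (hb : ⇑b = h) (e : E) (x : H) (n : ι) :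
    b.repr (F.S e x) n =
      (hF.branchingSystem.R e).indicator (fun m => b.repr x (hF.branchingSystem.finv e m)) n := by
  subst hb
  rw [b.repr_apply_eq_inner_adjoint, ← ContinuousLinearMap.star_eq_adjoint]
  by_cases hn : n ∈ hF.branchingSystem.R e
  · rw [indicator_of_mem hn, ← hF.apply_finv hn, b.repr_apply_apply]
  · rw [indicator_of_notMem hn, hF.star_S_apply_eq_zero hn, inner_zero_left]

end IsPermutativeBasis

end Ultragraph.CKFamily

namespace Ultragraph

theorem permutative_unitarily_equivalent_branchingSystem_general
    {V E : Type*} {G : Ultragraph V E} {H : Type*} [NormedAddCommGroup H]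
    [InnerProductSpace ℂ H] [CompleteSpace H]
    (F : CKFamily G (H →L[ℂ] H))
    (h : ℕ → H) (hinj : Function.Injective h)
    (Bv : V → Set H) (Bre : E → Set H) (Be : E → Set H)
    (hB : IsONBasisOf (Set.range h) Set.univ)
    (hBv : ∀ v, IsONBasisOf (Bv v) (Set.range ⇑(F.P {v})))
    (hBre : ∀ e, IsONBasisOf (Bre e) (Set.range ⇑(F.P (G.r e))))
    (hBe : ∀ e, IsONBasisOf (Be e) (Set.range ⇑(F.S e * star (F.S e))))
    (hBreB : ∀ e, Bre e ⊆ Set.range h) (hBvB : ∀ v, Bv v ⊆ Set.range h)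
    (hBeBv : ∀ v, (⋃ e ∈ {e | G.s e = v}, Be e) ⊆ Bv v)
    (hB2B : ∀ e, ⇑(F.S e) '' Bre e = Be e) :
    ∃ (BS : BranchingSystem G ℕ (Measure.count : Measure ℕ))
      (U : H ≃ₗᵢ[ℂ] lp (fun _ : ℕ => ℂ) 2),
      (∀ n, U (h n) = lp.single 2 n (1 : ℂ)) ∧
      (∀ e, BS.R e = {n | h n ∈ Be e}) ∧
      (∀ e, ∀ n ∈ BS.D (G.r e), h (BS.f e n) = F.S e (h n)) ∧
      (∀ A, G.InG0 A → ∀ (x : H) (n : ℕ),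
        (U ((F.P A) x) : ∀ _ : ℕ, ℂ) n = (BS.D A).indicator (fun m => (U x : ∀ _ : ℕ, ℂ) m) n) ∧
      ∀ (e : E) (x : H) (n : ℕ),
        (U ((F.S e) x) : ∀ _ : ℕ, ℂ) n =
          (BS.R e).indicator (fun m => (U x : ∀ _ : ℕ, ℂ) (BS.finv e m)) n := by
  have hon : Orthonormal ℂ h := (orthonormal_subtype_range hinj).1 hB.2.1
  have hBeB : ∀ e, Be e ⊆ range h := fun e =>
    (subset_biUnion_of_mem (u := Be) (show e ∈ {e' | G.s e' = G.s e} from rfl)).trans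
      ((hBeBv (G.s e)).trans (hBvB (G.s e)))
  have hF : F.IsPermutativeBasis h :=
    CKFamily.isPermutativeBasis_of_isONBasisOf hon hBv hBre hBe hBvB hBreB hBeB hB2B
  let b : HilbertBasis ℕ ℂ H := .mk hon hB.top_le_topologicalClosure_span
  have hb : ⇑b = h := HilbertBasis.coe_mk hon _
  refine ⟨hF.branchingSystem, b.repr, fun n => hb ▸ b.repr_self n, fun e => ext fun n => ?_,
    fun e n hn => hF.apply_f hn, fun A hA => hF.repr_P_apply b hb hA,
    hF.repr_S_apply b hb⟩
  exact (F.isStarProjection_S_mul_star e).apply_eq_self_iff hon (hBe e) (hBeB e)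

/-- Every permutative representation is unitarily equivalent, via `h_n ↦ δ_n`, to the
representation on `ℓ²(ℕ)` induced from a branching system on `ℕ` with counting measure. -/
theorem permutative_unitarily_equivalent_branchingSystem
    {V E : Type*} {G : Ultragraph V E} {H : Type*} [NormedAddCommGroup H]
    [InnerProductSpace ℂ H] [CompleteSpace H]
    (F : CKFamily G (H →L[ℂ] H))
    (h : ℕ → H) (hinj : Function.Injective h)
    (Bv : V → Set H) (Bre : E → Set H) (Be : E → Set H)
    (hB : IsONBasisOf (Set.range h) Set.univ)
    (hBv : ∀ v, IsONBasisOf (Bv v) (Set.range ⇑(F.P {v})))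
    (hBre : ∀ e, IsONBasisOf (Bre e) (Set.range ⇑(F.P (G.r e))))
    (hBe : ∀ e, IsONBasisOf (Be e) (Set.range ⇑(F.S e * star (F.S e))))
    (hBreB : ∀ e, Bre e ⊆ Set.range h) (hBvB : ∀ v, Bv v ⊆ Set.range h)
    (hBvBre : ∀ v e, v ∈ G.r e → Bv v ⊆ Bre e)
    (hBeBv : ∀ v, (⋃ e ∈ {e | G.s e = v}, Be e) ⊆ Bv v)
    (hB2B : ∀ e, ⇑(F.S e) '' Bre e = Be e) :
    ∃ (BS : BranchingSystem G ℕ (Measure.count : Measure ℕ))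
      (U : H ≃ₗᵢ[ℂ] lp (fun _ : ℕ => ℂ) 2),
      (∀ n, U (h n) = lp.single 2 n (1 : ℂ)) ∧
      (∀ e, BS.R e = {n | h n ∈ Be e}) ∧
      (∀ e, ∀ n ∈ BS.D (G.r e), h (BS.f e n) = F.S e (h n)) ∧
      (∀ A, G.InG0 A → ∀ (x : H) (n : ℕ),
        (U ((F.P A) x) : ∀ _ : ℕ, ℂ) n = (BS.D A).indicator (fun m => (U x : ∀ _ : ℕ, ℂ) m) n) ∧
      ∀ (e : E) (x : H) (n : ℕ),
        (U ((F.S e) x) : ∀ _ : ℕ, ℂ) n =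
          (BS.R e).indicator (fun m => (U x : ∀ _ : ℕ, ℂ) (BS.finv e m)) n :=
  permutative_unitarily_equivalent_branchingSystem_general F h hinj Bv Bre Be hB hBv hBre hBe hBreB
    hBvB hBeBv hB2B

end Ultragraph
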